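/- arXiv:2110.13722 — 2 statements merged into one kernel-verified Lean document; each statement's English description precedes it below -/
import Mathlib

section
/- Let X be a Banach space, let C ⊆ X be a closed, bounded, convex, non-empty set containing at least two points, and let M = M(C) denote the space of non-expansive mappings C → C equipped with the supremum metric. Then the set {f ∈ M : Lip(f) < 1} of strict contractions C → C is a σ-lower porous subset of M. -/
open Filter Metric Set Topology

section Porosity

variable {α : Type*} [MetricSpace α]

/-- The set of radii `s > 0` such that some open ball of radius `s` is contained in
`ball x r \ P`.  Its supremum is the quantity `γ(x,r,P)` (with `sup ∅ = -∞`, i.e. the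
set being nonempty is exactly the condition `γ(x,r,P) > 0`). -/
def porHoles (P : Set α) (x : α) (r : ℝ) : Set ℝ :=
  {s : ℝ | 0 < s ∧ ∃ y : α, Metric.ball y s ⊆ Metric.ball x r \ P}

/-- `γ(x,r,P)`, as a real number. -/
noncomputable def porGamma (P : Set α) (x : α) (r : ℝ) : ℝ :=
  sSup (porHoles P x r)

/-- `P` is `φ`-upper porous at `x`:  `γ(x,r,P) > 0` for all `r > 0` and
`limsup_{r → 0+} φ(γ(x,r,P))/r > 0` (the limsup taken in the extended reals). -/
def IsPhiUpperPorousAt (φ : ℝ → ℝ) (P : Set α) (x : α) : Prop :=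
  (∀ r > 0, (porHoles P x r).Nonempty) ∧
    0 < Filter.limsup (fun r : ℝ => ((φ (porGamma P x r) / r : ℝ) : EReal))
        (nhdsWithin 0 (Set.Ioi 0))

/-- `P` is `φ`-lower porous at `x`:  `γ(x,r,P) > 0` for all `r > 0` and
`liminf_{r → 0+} φ(γ(x,r,P))/r > 0` (the liminf taken in the extended reals). -/
def IsPhiLowerPorousAt (φ : ℝ → ℝ) (P : Set α) (x : α) : Prop :=
  (∀ r > 0, (porHoles P x r).Nonempty) ∧
    0 < Filter.liminf (fun r : ℝ => ((φ (porGamma P x r) / r : ℝ) : EReal))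
        (nhdsWithin 0 (Set.Ioi 0))

def IsPhiUpperPorous (φ : ℝ → ℝ) (P : Set α) : Prop :=
  ∀ x ∈ P, IsPhiUpperPorousAt φ P x

def IsPhiLowerPorous (φ : ℝ → ℝ) (P : Set α) : Prop :=
  ∀ x ∈ P, IsPhiLowerPorousAt φ P x

def IsSigmaPhiUpperPorous (φ : ℝ → ℝ) (P : Set α) : Prop :=
  ∃ F : ℕ → Set α, P = ⋃ n, F n ∧ ∀ n, IsPhiUpperPorous φ (F n)

def IsSigmaPhiLowerPorous (φ : ℝ → ℝ) (P : Set α) : Prop :=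
  ∃ F : ℕ → Set α, P = ⋃ n, F n ∧ ∀ n, IsPhiLowerPorous φ (F n)

/-- Ordinary lower porosity is `φ`-lower porosity with `φ = id`. -/
def IsLowerPorousAt (P : Set α) (x : α) : Prop :=
  IsPhiLowerPorousAt (fun t => t) P x

def IsLowerPorous (P : Set α) : Prop :=
  IsPhiLowerPorous (fun t => t) P

def IsSigmaLowerPorous (P : Set α) : Prop :=
  IsSigmaPhiLowerPorous (fun t => t) P

end Porosity

section Nonexpansive

variable {X : Type*} [NormedAddCommGroup X]

/-- `Lip(f,x,r)`: the Lipschitz constant of `f` witnessed at `x` at scale `r`, i.e.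
`sup {‖f(y)-f(x)‖/‖y-x‖ : y ∈ C, 0 < ‖y-x‖ ≤ r}`.  (In the subtype `↥C`, `dist y x`
is exactly `‖(y:X) - (x:X)‖`.) -/
noncomputable def LipScale {C : Set X} (f : ↥C → ↥C) (x : ↥C) (r : ℝ) : ℝ :=
  sSup ((fun y : ↥C => dist (f y) (f x) / dist y x) '' {y : ↥C | 0 < dist y x ∧ dist y x ≤ r})

/-- `Lip(f,x) = lim_{r → 0+} Lip(f,x,r)`; since `r ↦ Lip(f,x,r)` is nonnegative and
monotone, this limit is the infimum over `r > 0`. -/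
noncomputable def LipPt {C : Set X} (f : ↥C → ↥C) (x : ↥C) : ℝ :=
  sInf ((fun r : ℝ => LipScale f x r) '' Set.Ioi 0)

/-- `Lip(f)`: the (global) Lipschitz constant of `f`. -/
noncomputable def LipGlobal {C : Set X} (f : ↥C → ↥C) : ℝ :=
  sSup {L : ℝ | ∃ x y : ↥C, y ≠ x ∧ L = dist (f y) (f x) / dist y x}

/-- The space `M(C)` of non-expansive mappings `C → C`, equipped with the supremum
metric (as a subspace of the bounded continuous functions `↥C →ᵇ ↥C`; every
non-expansive self-map of a bounded set is bounded and continuous). -/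
abbrev NonexpMap (C : Set X) : Type _ :=
  {f : BoundedContinuousFunction ↥C ↥C // LipschitzWith 1 ⇑f}

end Nonexpansive

section Main

variable {X : Type*} [NormedAddCommGroup X] [NormedSpace ℝ X]

lemma ratio_bddAbove {C : Set X} (h : NonexpMap C) :
    BddAbove {L : ℝ | ∃ x y : ↥C, y ≠ x ∧ L = dist (h.1 y) (h.1 x) / dist y x} := by
  refine ⟨1, ?_⟩
  rintro L ⟨x, y, hne, rfl⟩
  have hd : (0:ℝ) < dist y x := dist_pos.2 hne
  rw [div_le_one hd]
  simpa using h.2.dist_le_mul y x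

lemma lip_pointwise {C : Set X} (f : NonexpMap C) {k : ℝ}
    (hk : LipGlobal (⇑f.1) ≤ k) (x y : ↥C) :
    dist (f.1 y) (f.1 x) ≤ k * dist y x := by
  rcases eq_or_ne y x with rfl | hne
  · simp
  · have hd : (0:ℝ) < dist y x := dist_pos.2 hne
    have hmem : dist (f.1 y) (f.1 x) / dist y x ∈
        {L : ℝ | ∃ x' y' : ↥C, y' ≠ x' ∧ L = dist (f.1 y') (f.1 x') / dist y' x'} :=
      ⟨x, y, hne, rfl⟩
    have h1 : dist (f.1 y) (f.1 x) / dist y x ≤ k :=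
      (le_csSup (ratio_bddAbove f) hmem).trans hk
    calc dist (f.1 y) (f.1 x) = dist (f.1 y) (f.1 x) / dist y x * dist y x := by
          field_simp
      _ ≤ k * dist y x := mul_le_mul_of_nonneg_right h1 hd.le

lemma clamp_sub_le {a b : ℝ} (h : b ≤ a) :
    min 1 (max 0 a) - min 1 (max 0 b) ≤ a - b := by
  simp only [min_def, max_def]; split_ifs <;> linarith

set_option maxHeartbeats 2000000 in
lemma exists_hole {C : Set X} (hconv : Convex ℝ C) (hbdd : Bornology.IsBounded C)
    {p₁ p₂ : X} (h₁ : p₁ ∈ C) (h₂ : p₂ ∈ C)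
    {ε : ℝ} (hε0 : 0 < ε) (hε1 : ε < 1)
    (f : NonexpMap C) (hf : ∀ x y : ↥C, dist (f.1 y) (f.1 x) ≤ (1 - ε) * dist y x)
    {r : ℝ} (hr : 0 < r) (hsmall : r / 4 * Real.exp (-2/ε) ≤ dist p₂ p₁ / 2) :
    ∃ g : NonexpMap C, dist g f ≤ r / 2 ∧
      ∃ a b : ↥C, dist b a = r / 4 * Real.exp (-2/ε) ∧
        (1 - ε/2) * (r / 4 * Real.exp (-2/ε)) ≤ dist (g.1 b) (g.1 a) := by
  have hEE : Real.exp (-2/ε) * Real.exp (2/ε) = 1 := by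
    rw [← Real.exp_add]
    have h0 : -2/ε + 2/ε = 0 := by ring
    rw [h0, Real.exp_zero]
  set ρ : ℝ := r / 4 * Real.exp (-2/ε) with hρdef
  have hρ : 0 < ρ := by positivity
  set Δ : ℝ := dist p₂ p₁ with hΔdef
  have hΔ : 0 < Δ := by
    have := dist_nonneg (x := p₂) (y := p₁)
    rw [← hΔdef] at this
    nlinarith
  have h2ρ : 2 * ρ * Real.exp (2/ε) = r / 2 := by
    rw [hρdef]; linear_combination (r/2) * hEE
  -- the two marked points a, b in C
  set b : ↥C := ⟨p₁, h₁⟩ with hbdef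
  have haX : p₁ + (ρ/Δ) • (p₂ - p₁) ∈ C := by
    have h01 : (0:ℝ) ≤ ρ/Δ := by positivity
    have h11 : ρ/Δ ≤ 1 := by rw [div_le_one hΔ]; linarith
    have hmem := hconv h₁ h₂ (by linarith : (0:ℝ) ≤ 1 - ρ/Δ) h01 (by ring)
    have heq : p₁ + (ρ/Δ) • (p₂ - p₁) = (1 - ρ/Δ) • p₁ + (ρ/Δ) • p₂ := by module
    rw [heq]; exact hmem
  set a : ↥C := ⟨p₁ + (ρ/Δ) • (p₂ - p₁), haX⟩ with hadef
  have hap : dist (a:X) p₁ = ρ := by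
    have hcoe : (a:X) = p₁ + (ρ/Δ) • (p₂ - p₁) := rfl
    rw [hcoe, dist_eq_norm, add_sub_cancel_left, norm_smul, Real.norm_eq_abs,
      abs_of_nonneg (by positivity), ← dist_eq_norm, ← hΔdef]
    field_simp
  -- anchor point and far point
  set fb : X := (f.1 b : X) with hfbdef
  have hfbC : fb ∈ C := (f.1 b).2
  obtain ⟨c, hcC, hcfar⟩ : ∃ c, c ∈ C ∧ Δ/2 ≤ dist c fb := by
    rcases le_total (Δ/2) (dist p₂ fb) with h | h
    · exact ⟨p₂, h₂, h⟩
    · refine ⟨p₁, h₁, ?_⟩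
      have ht := dist_triangle p₂ fb p₁
      have h2 : dist fb p₁ = dist p₁ fb := dist_comm _ _
      rw [← hΔdef] at ht
      linarith
  set δ₀ : ℝ := ‖c - fb‖ with hδdef
  have hδΔ : Δ/2 ≤ δ₀ := by rw [hδdef, ← dist_eq_norm]; exact hcfar
  have hδ0 : 0 < δ₀ := by linarith
  -- profile functions
  set m : ↥C → ℝ := fun z => (1 - ε/2) * max 0 (ρ - dist (z:X) p₁) with hmdef
  set φ : ℝ → ℝ := fun d => min 1 (max 0 (1 - ε/2 * Real.log ((ρ + d)/(2*ρ)))) with hφdef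
  set B : ↥C → ℝ := fun z => φ (dist (z:X) p₁) with hBdef
  set Q : ↥C → X := fun z => fb + (m z / δ₀) • (c - fb) with hQdef
  set G : ↥C → X := fun z => (1 - B z) • (f.1 z : X) + B z • Q z with hGdef
  -- basic facts about m
  have hm0 : ∀ z, 0 ≤ m z := by
    intro z; simp only [hmdef]
    exact mul_nonneg (by linarith) (le_max_left _ _)
  have hmρ : ∀ z, m z ≤ ρ := by
    intro z; simp only [hmdef]
    have h1 : max 0 (ρ - dist (z:X) p₁) ≤ ρ :=
      max_le hρ.le (by linarith [dist_nonneg (x := (z:X)) (y := p₁)])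
    nlinarith [le_max_left (0:ℝ) (ρ - dist (z:X) p₁)]
  have hmδ : ∀ z, m z ≤ δ₀ := fun z => (hmρ z).trans (by linarith)
  have hmlip : ∀ x y : ↥C, |m y - m x| ≤ (1 - ε/2) * dist (y:X) (x:X) := by
    intro x y
    simp only [hmdef]
    rw [← mul_sub, abs_mul, abs_of_nonneg (by linarith : (0:ℝ) ≤ 1 - ε/2)]
    apply mul_le_mul_of_nonneg_left _ (by linarith)
    have h1 : |max 0 (ρ - dist (y:X) p₁) - max 0 (ρ - dist (x:X) p₁)| ≤
        |(ρ - dist (y:X) p₁) - (ρ - dist (x:X) p₁)| := by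
      have := abs_max_sub_max_le_abs (ρ - dist (y:X) p₁) (ρ - dist (x:X) p₁) 0
      simpa [max_comm] using this
    have h2 : (ρ - dist (y:X) p₁) - (ρ - dist (x:X) p₁) = dist (x:X) p₁ - dist (y:X) p₁ := by
      ring
    have h3 : |dist (x:X) p₁ - dist (y:X) p₁| ≤ dist (x:X) (y:X) := abs_dist_sub_le _ _ _
    rw [h2] at h1
    calc |max 0 (ρ - dist (y:X) p₁) - max 0 (ρ - dist (x:X) p₁)|
        ≤ |dist (x:X) p₁ - dist (y:X) p₁| := h1
      _ ≤ dist (x:X) (y:X) := h3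
      _ = dist (y:X) (x:X) := dist_comm _ _
  -- facts about Q
  have hQC : ∀ z, Q z ∈ C := by
    intro z
    simp only [hQdef]
    have h01 : (0:ℝ) ≤ m z / δ₀ := div_nonneg (hm0 z) hδ0.le
    have h11 : m z / δ₀ ≤ 1 := by rw [div_le_one hδ0]; exact hmδ z
    have hmem := hconv hfbC hcC (by linarith : (0:ℝ) ≤ 1 - m z / δ₀) h01 (by ring)
    have heq : fb + (m z / δ₀) • (c - fb) = (1 - m z / δ₀) • fb + (m z / δ₀) • c := by module
    rw [heq]; exact hmem
  have hQsub : ∀ x y : ↥C, Q y - Q x = ((m y - m x)/δ₀) • (c - fb) := by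
    intro x y; simp only [hQdef]
    rw [sub_div]; module
  have hQnorm : ∀ x y : ↥C, ‖Q y - Q x‖ ≤ (1 - ε/2) * dist (y:X) (x:X) := by
    intro x y
    rw [hQsub x y, norm_smul, Real.norm_eq_abs, abs_div, abs_of_nonneg hδ0.le, ← hδdef,
      div_mul_cancel₀ _ hδ0.ne']
    exact hmlip x y
  have hE : ∀ z : ↥C, ‖Q z - (f.1 z : X)‖ ≤ ρ + dist (z:X) p₁ := by
    intro z
    have hsplit : Q z - (f.1 z : X) = (m z / δ₀) • (c - fb) + (fb - (f.1 z : X)) := by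
      simp only [hQdef]; module
    rw [hsplit]
    refine (norm_add_le _ _).trans ?_
    have hq1 : ‖(m z / δ₀) • (c - fb)‖ ≤ ρ := by
      rw [norm_smul, Real.norm_eq_abs, abs_of_nonneg (div_nonneg (hm0 z) hδ0.le), ← hδdef,
        div_mul_cancel₀ _ hδ0.ne']
      exact hmρ z
    have hq2 : ‖fb - (f.1 z : X)‖ ≤ dist (z:X) p₁ := by
      have hl := f.2.dist_le_mul b z
      rw [Subtype.dist_eq (f.1 b) (f.1 z), Subtype.dist_eq b z] at hl
      have hb1 : (b:X) = p₁ := rfl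
      rw [hb1] at hl
      simp only [NNReal.coe_one, one_mul] at hl
      rw [← hfbdef] at hl
      calc ‖fb - (f.1 z : X)‖ = dist fb (f.1 z : X) := (dist_eq_norm _ _).symm
        _ ≤ dist p₁ (z:X) := hl
        _ = dist (z:X) p₁ := dist_comm _ _
    linarith
  -- facts about φ / B
  have hB0 : ∀ z, 0 ≤ B z := by
    intro z; simp only [hBdef, hφdef]
    exact le_min zero_le_one (le_max_left _ _)
  have hB1 : ∀ z, B z ≤ 1 := by
    intro z; simp only [hBdef, hφdef]; exact min_le_left _ _
  have hφone : ∀ d : ℝ, 0 ≤ d → d ≤ ρ → φ d = 1 := by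
    intro d h0 hdρ
    have hu0 : (0:ℝ) ≤ (ρ + d)/(2*ρ) := by positivity
    have hu1 : (ρ + d)/(2*ρ) ≤ 1 := by rw [div_le_one (by positivity)]; linarith
    have hlog : Real.log ((ρ+d)/(2*ρ)) ≤ 0 := Real.log_nonpos hu0 hu1
    have h1 : (1:ℝ) ≤ 1 - ε/2 * Real.log ((ρ+d)/(2*ρ)) := by nlinarith
    simp only [hφdef]
    exact min_eq_left (h1.trans (le_max_right _ _))
  have hφdec : ∀ s t : ℝ, 0 ≤ s → s ≤ t → φ s - φ t ≤ ε/2 * ((t - s)/(ρ + s)) := by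
    intro s t h0 hst
    have hρs : (0:ℝ) < ρ + s := by linarith
    have hρt : (0:ℝ) < ρ + t := by linarith
    have hus : (0:ℝ) < (ρ+s)/(2*ρ) := by positivity
    have hut : (0:ℝ) < (ρ+t)/(2*ρ) := by positivity
    have hlogm : Real.log ((ρ+s)/(2*ρ)) ≤ Real.log ((ρ+t)/(2*ρ)) := by
      gcongr
    have hL : (1 - ε/2 * Real.log ((ρ+t)/(2*ρ))) ≤ (1 - ε/2 * Real.log ((ρ+s)/(2*ρ))) := by
      nlinarith
    have hclamp := clamp_sub_le hL
    have hlog : Real.log ((ρ+t)/(2*ρ)) - Real.log ((ρ+s)/(2*ρ)) ≤ (t-s)/(ρ+s) := by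
      rw [← Real.log_div hut.ne' hus.ne']
      have hdd : (ρ+t)/(2*ρ) / ((ρ+s)/(2*ρ)) = (ρ+t)/(ρ+s) := by
        field_simp
      rw [hdd]
      have hls := Real.log_le_sub_one_of_pos (show (0:ℝ) < (ρ+t)/(ρ+s) by positivity)
      have h3 : (ρ+t)/(ρ+s) - 1 = (t-s)/(ρ+s) := by
        rw [div_sub_one hρs.ne']; congr 1; ring
      linarith
    simp only [hφdef]
    calc min 1 (max 0 (1 - ε/2 * Real.log ((ρ + s)/(2*ρ))))
          - min 1 (max 0 (1 - ε/2 * Real.log ((ρ + t)/(2*ρ))))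
        ≤ (1 - ε/2 * Real.log ((ρ+s)/(2*ρ))) - (1 - ε/2 * Real.log ((ρ+t)/(2*ρ))) := hclamp
      _ = ε/2 * (Real.log ((ρ+t)/(2*ρ)) - Real.log ((ρ+s)/(2*ρ))) := by ring
      _ ≤ ε/2 * ((t-s)/(ρ+s)) := by
          apply mul_le_mul_of_nonneg_left hlog (by positivity)
  have hφanti : ∀ s t : ℝ, 0 ≤ s → s ≤ t → φ t ≤ φ s := by
    intro s t h0 hst
    have hus : (0:ℝ) < (ρ+s)/(2*ρ) := by positivity
    have hlogm : Real.log ((ρ+s)/(2*ρ)) ≤ Real.log ((ρ+t)/(2*ρ)) := by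
      gcongr
    simp only [hφdef]
    apply min_le_min le_rfl
    apply max_le_max le_rfl
    nlinarith
  have hsupp : ∀ z : ↥C, 0 < B z → ρ + dist (z:X) p₁ ≤ r/2 := by
    intro z hz
    simp only [hBdef, hφdef] at hz
    have h1 : 0 < max 0 (1 - ε/2 * Real.log ((ρ + dist (z:X) p₁)/(2*ρ))) := (lt_min_iff.1 hz).2
    have h2 : 0 < 1 - ε/2 * Real.log ((ρ + dist (z:X) p₁)/(2*ρ)) := by
      rcases lt_max_iff.1 h1 with h | h
      · exact absurd h (lt_irrefl 0)
      · exact h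
    have hu0 : (0:ℝ) < (ρ + dist (z:X) p₁)/(2*ρ) := by
      have := dist_nonneg (x := (z:X)) (y := p₁); positivity
    have hlt : Real.log ((ρ + dist (z:X) p₁)/(2*ρ)) < 2/ε := by
      rw [lt_div_iff₀ hε0]; nlinarith
    have hexp := Real.exp_lt_exp.2 hlt
    rw [Real.exp_log hu0] at hexp
    have := hexp
    have h4 : ρ + dist (z:X) p₁ < 2*ρ * Real.exp (2/ε) := by
      rw [div_lt_iff₀ (by positivity)] at this
      linarith
    linarith [h2ρ]
  -- G maps into C
  have hGC : ∀ z, G z ∈ C := by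
    intro z
    simp only [hGdef]
    exact hconv (f.1 z).2 (hQC z) (by linarith [hB1 z]) (hB0 z) (by ring)
  -- the central Lipschitz estimate
  have hkey : ∀ x y : ↥C, dist (x:X) p₁ ≤ dist (y:X) p₁ → ‖G y - G x‖ ≤ dist (y:X) (x:X) := by
    intro x y hxy
    have hN0 : (0:ℝ) ≤ dist (y:X) (x:X) := dist_nonneg
    have hdecomp : G y - G x = (1 - B y) • ((f.1 y : X) - (f.1 x : X))
        + B y • (Q y - Q x) + (B x - B y) • ((f.1 x : X) - Q x) := by
      simp only [hGdef]; module
    have hfyx : ‖(f.1 y : X) - (f.1 x : X)‖ ≤ (1-ε) * dist (y:X) (x:X) := by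
      have := hf x y
      rw [Subtype.dist_eq (f.1 y) (f.1 x), Subtype.dist_eq y x, dist_eq_norm] at this
      exact this
    have h1 : ‖(1 - B y) • ((f.1 y : X) - (f.1 x : X))‖
        ≤ (1 - B y) * ((1-ε) * dist (y:X) (x:X)) := by
      rw [norm_smul, Real.norm_eq_abs, abs_of_nonneg (by linarith [hB1 y])]
      exact mul_le_mul_of_nonneg_left hfyx (by linarith [hB1 y])
    have h2 : ‖B y • (Q y - Q x)‖ ≤ B y * ((1-ε/2) * dist (y:X) (x:X)) := by
      rw [norm_smul, Real.norm_eq_abs, abs_of_nonneg (hB0 y)]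
      exact mul_le_mul_of_nonneg_left (hQnorm x y) (hB0 y)
    have h3 : ‖(B x - B y) • ((f.1 x : X) - Q x)‖ ≤ ε/2 * dist (y:X) (x:X) := by
      rw [norm_smul, Real.norm_eq_abs]
      have hBxy : B y ≤ B x := by
        simp only [hBdef]
        exact hφanti _ _ dist_nonneg hxy
      rw [abs_of_nonneg (by linarith)]
      have hd1 : B x - B y ≤ ε/2 * ((dist (y:X) p₁ - dist (x:X) p₁)/(ρ + dist (x:X) p₁)) := by
        simp only [hBdef]
        exact hφdec _ _ dist_nonneg hxy
      have hd2 : ‖(f.1 x : X) - Q x‖ ≤ ρ + dist (x:X) p₁ := by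
        rw [norm_sub_rev]; exact hE x
      have hρx : (0:ℝ) < ρ + dist (x:X) p₁ := by
        linarith [dist_nonneg (x := (x:X)) (y := p₁)]
      calc (B x - B y) * ‖(f.1 x : X) - Q x‖
          ≤ (ε/2 * ((dist (y:X) p₁ - dist (x:X) p₁)/(ρ + dist (x:X) p₁)))
              * (ρ + dist (x:X) p₁) := by
            apply mul_le_mul hd1 hd2 (norm_nonneg _)
            exact mul_nonneg (by positivity) (div_nonneg (by linarith) (by positivity))
        _ = ε/2 * (dist (y:X) p₁ - dist (x:X) p₁) := by
            rw [mul_assoc, div_mul_cancel₀ _ hρx.ne']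
        _ ≤ ε/2 * dist (y:X) (x:X) := by
            have habs : |dist (y:X) p₁ - dist (x:X) p₁| ≤ dist (y:X) (x:X) :=
              abs_dist_sub_le _ _ _
            have := le_abs_self (dist (y:X) p₁ - dist (x:X) p₁)
            nlinarith
    have hco : (1 - B y) * (1-ε) + B y * (1-ε/2) + ε/2 ≤ 1 := by
      nlinarith [hB0 y, hB1 y]
    calc ‖G y - G x‖ ≤ ‖(1 - B y) • ((f.1 y : X) - (f.1 x : X))‖
          + ‖B y • (Q y - Q x)‖ + ‖(B x - B y) • ((f.1 x : X) - Q x)‖ := by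
          rw [hdecomp]; exact norm_add₃_le
      _ ≤ (1 - B y) * ((1-ε) * dist (y:X) (x:X)) + B y * ((1-ε/2) * dist (y:X) (x:X))
          + ε/2 * dist (y:X) (x:X) := by linarith
      _ = ((1 - B y) * (1-ε) + B y * (1-ε/2) + ε/2) * dist (y:X) (x:X) := by ring
      _ ≤ 1 * dist (y:X) (x:X) := mul_le_mul_of_nonneg_right hco hN0
      _ = dist (y:X) (x:X) := one_mul _
  have hGlip : ∀ x y : ↥C, ‖G y - G x‖ ≤ dist (y:X) (x:X) := by
    intro x y
    rcases le_total (dist (x:X) p₁) (dist (y:X) p₁) with h | h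
    · exact hkey x y h
    · rw [norm_sub_rev, dist_comm]; exact hkey y x h
  -- build g
  obtain ⟨Db, hDb⟩ := Metric.isBounded_iff.1 hbdd
  set gfun : ↥C → ↥C := fun z => ⟨G z, hGC z⟩ with hgfundef
  have hglip : LipschitzWith 1 gfun := by
    apply LipschitzWith.of_dist_le_mul
    intro x y
    rw [NNReal.coe_one, one_mul, Subtype.dist_eq (gfun x) (gfun y), Subtype.dist_eq x y]
    have hc1 : ((gfun x : ↥C) : X) = G x := rfl
    have hc2 : ((gfun y : ↥C) : X) = G y := rfl
    rw [hc1, hc2, dist_eq_norm]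
    exact hGlip y x
  set gc : BoundedContinuousFunction ↥C ↥C :=
    BoundedContinuousFunction.mkOfBound ⟨gfun, hglip.continuous⟩ Db
      (fun x y => by
        show dist (gfun x) (gfun y) ≤ Db
        rw [Subtype.dist_eq (gfun x) (gfun y)]
        exact hDb (hGC x) (hGC y)) with hgcdef
  set g : NonexpMap C := ⟨gc, hglip⟩ with hgdef
  have hgapp : ∀ z : ↥C, ((g.1 z : ↥C) : X) = G z := fun z => rfl
  -- distance from f
  have hdistgf : dist g f ≤ r/2 := by
    rw [Subtype.dist_eq g f]
    rw [BoundedContinuousFunction.dist_le (by positivity)]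
    intro z
    rw [Subtype.dist_eq (g.1 z) (f.1 z), dist_eq_norm, hgapp z]
    have hGF : G z - (f.1 z : X) = B z • (Q z - (f.1 z : X)) := by
      simp only [hGdef]; module
    rw [hGF, norm_smul, Real.norm_eq_abs, abs_of_nonneg (hB0 z)]
    rcases (hB0 z).eq_or_lt with h | h
    · rw [← h, zero_mul]; positivity
    · have hs := hsupp z h
      calc B z * ‖Q z - (f.1 z : X)‖ ≤ 1 * (ρ + dist (z:X) p₁) := by
            apply mul_le_mul (hB1 z) (hE z) (norm_nonneg _) zero_le_one
        _ ≤ r/2 := by linarith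
  refine ⟨g, hdistgf, a, b, ?_, ?_⟩
  · rw [Subtype.dist_eq b a]
    have hb1 : (b:X) = p₁ := rfl
    rw [hb1, dist_comm]
    exact hap
  · -- the stretched pair
    have hap' : dist (p₁ + (ρ/Δ) • (p₂ - p₁)) p₁ = ρ := hap
    have hBb : B b = 1 := by
      simp only [hBdef]
      rw [dist_self]
      exact hφone 0 le_rfl hρ.le
    have hBa : B a = 1 := by
      simp only [hBdef]
      rw [hap']
      exact hφone ρ hρ.le le_rfl
    have hmb : m b = (1-ε/2) * ρ := by
      simp only [hmdef]
      rw [dist_self, sub_zero, max_eq_right hρ.le]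
    have hma : m a = 0 := by
      simp only [hmdef]
      rw [hap', sub_self, max_self, mul_zero]
    have hGb : G b = fb + (((1-ε/2) * ρ)/δ₀) • (c - fb) := by
      have h0 : G b = (1 - B b) • ((f.1 b : ↥C) : X) + B b • (fb + (m b / δ₀) • (c - fb)) := rfl
      rw [h0, hBb, hmb]; module
    have hGa : G a = fb := by
      have h0 : G a = (1 - B a) • ((f.1 a : ↥C) : X) + B a • (fb + (m a / δ₀) • (c - fb)) := rfl
      rw [h0, hBa, hma]; module
    rw [Subtype.dist_eq (g.1 b) (g.1 a), hgapp b, hgapp a, dist_eq_norm, hGb, hGa,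
      add_sub_cancel_left, norm_smul, Real.norm_eq_abs,
      abs_of_nonneg (div_nonneg (mul_nonneg (by linarith) hρ.le) hδ0.le), ← hδdef,
      div_mul_cancel₀ _ hδ0.ne']

end Main

section Porous

variable {X : Type*} [NormedAddCommGroup X] [NormedSpace ℝ X]

set_option maxHeartbeats 1000000 in
lemma piece_lower_porous {C : Set X} (hconv : Convex ℝ C) (hbdd : Bornology.IsBounded C)
    {p₁ p₂ : X} (h₁ : p₁ ∈ C) (h₂ : p₂ ∈ C) (hp : p₁ ≠ p₂)
    {ε : ℝ} (hε0 : 0 < ε) (hε1 : ε < 1) :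
    IsLowerPorous {f : NonexpMap C | LipGlobal (⇑f.1) ≤ 1 - ε} := by
  intro f hfP
  have hfP' : LipGlobal (⇑f.1) ≤ 1 - ε := hfP
  have hΔ : 0 < dist p₂ p₁ := dist_pos.2 (Ne.symm hp)
  have hEE : Real.exp (-2/ε) * Real.exp (2/ε) = 1 := by
    rw [← Real.exp_add]
    have h0 : -2/ε + 2/ε = 0 := by ring
    rw [h0, Real.exp_zero]
  set Δ : ℝ := dist p₂ p₁ with hΔdef
  set cst : ℝ := ε * Real.exp (-2/ε) / 32 with hcdef
  have hc : 0 < cst := by positivity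
  set rbar : ℝ := 2 * Δ * Real.exp (2/ε) with hrbardef
  have hrbar : 0 < rbar := by positivity
  have hpt : ∀ x y : ↥C, dist (f.1 y) (f.1 x) ≤ (1 - ε) * dist y x := lip_pointwise f hfP'
  have hole : ∀ r : ℝ, 0 < r → r ≤ rbar →
      cst * r ∈ porHoles {f : NonexpMap C | LipGlobal (⇑f.1) ≤ 1 - ε} f r := by
    intro r hr hrle
    have hsmall : r / 4 * Real.exp (-2/ε) ≤ Δ / 2 := by
      have h1 : r / 4 * Real.exp (-2/ε) ≤ rbar / 4 * Real.exp (-2/ε) :=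
        mul_le_mul_of_nonneg_right (by linarith) (Real.exp_nonneg _)
      have h2 : rbar / 4 * Real.exp (-2/ε) = Δ / 2 := by
        rw [hrbardef]; linear_combination (Δ/2) * hEE
      linarith
    obtain ⟨g, hgf, a, b, hba, hstr⟩ := exists_hole hconv hbdd h₁ h₂ hε0 hε1 f hpt hr hsmall
    have hρ : 0 < r / 4 * Real.exp (-2/ε) := by positivity
    refine ⟨by positivity, g, ?_⟩
    intro h hh
    rw [mem_ball] at hh
    have hcr2 : cst * r ≤ r / 2 := by
      have he1 : Real.exp (-2/ε) ≤ 1 :=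
        Real.exp_le_one_iff.2 (by
          apply div_nonpos_of_nonpos_of_nonneg <;> linarith)
      have hεe : ε * Real.exp (-2/ε) ≤ 1 :=
        mul_le_one₀ hε1.le (Real.exp_nonneg _) he1
      rw [hcdef]
      nlinarith
    constructor
    · rw [mem_ball]
      have htri : dist h f ≤ dist h g + dist g f := dist_triangle _ _ _
      have : dist g f ≤ r / 2 := hgf
      linarith
    · intro hmem
      have hmem' : LipGlobal (⇑h.1) ≤ 1 - ε := hmem
      have hup := lip_pointwise h hmem' a b
      rw [hba] at hup
      have h1 : dist (h.1 b) (g.1 b) ≤ dist h g := by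
        rw [Subtype.dist_eq h g]
        exact BoundedContinuousFunction.dist_coe_le_dist b
      have h2 : dist (h.1 a) (g.1 a) ≤ dist h g := by
        rw [Subtype.dist_eq h g]
        exact BoundedContinuousFunction.dist_coe_le_dist a
      have htri := dist_triangle4 (g.1 b) (h.1 b) (h.1 a) (g.1 a)
      have hc1 : dist (g.1 b) (h.1 b) = dist (h.1 b) (g.1 b) := dist_comm _ _
      have hc2 : dist (h.1 a) (g.1 a) = dist (g.1 a) (h.1 a) := dist_comm _ _
      have hcrρ : cst * r = ε / 8 * (r / 4 * Real.exp (-2/ε)) := by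
        rw [hcdef]; ring
      nlinarith [hstr, hup, htri, h1, h2, hh, mul_pos hε0 hρ]
  constructor
  · intro r hr
    obtain ⟨hpos, y, hsub⟩ := hole (min r rbar) (lt_min hr hrbar) (min_le_right _ _)
    exact ⟨cst * min r rbar, hpos, y,
      hsub.trans (diff_subset_diff_left (ball_subset_ball (min_le_left _ _)))⟩
  · have hev : ∀ᶠ r in nhdsWithin (0:ℝ) (Set.Ioi 0),
        (cst : EReal) ≤ (((fun t => t) (porGamma {f : NonexpMap C | LipGlobal (⇑f.1) ≤ 1 - ε} f r) / r : ℝ) : EReal) := by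
      filter_upwards [Ioc_mem_nhdsGT_of_mem (⟨le_refl 0, hrbar⟩ : (0:ℝ) ∈ Set.Ico 0 rbar)]
        with r hr
      obtain ⟨hr0, hrle⟩ := hr
      have hbdd' : BddAbove (porHoles {f : NonexpMap C | LipGlobal (⇑f.1) ≤ 1 - ε} f r) := by
        refine ⟨r, ?_⟩
        rintro s ⟨hs, y, hsub⟩
        have hy := hsub (mem_ball_self hs)
        have hyf : dist y f < r := mem_ball.1 hy.1
        have hfy : ¬ (dist f y < s) := fun hcon => (hsub (mem_ball.2 hcon)).2 hfP
        push_neg at hfy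
        calc s ≤ dist f y := hfy
          _ = dist y f := dist_comm _ _
          _ ≤ r := hyf.le
      have hγ : cst * r ≤ porGamma {f : NonexpMap C | LipGlobal (⇑f.1) ≤ 1 - ε} f r :=
        le_csSup hbdd' (hole r hr0 hrle)
      have hdiv : cst ≤ porGamma {f : NonexpMap C | LipGlobal (⇑f.1) ≤ 1 - ε} f r / r := by
        rw [le_div_iff₀ hr0]
        linarith
      exact_mod_cast hdiv
    have hlim := Filter.le_liminf_of_le (by isBoundedDefault) hev
    calc (0:EReal) < (cst : ℝ) := by exact_mod_cast hc
      _ ≤ _ := hlim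

end Porous

/-- Let `C` be a closed, bounded, convex, nontrivial subset of a
Banach space.  Then the set of strict contractions `{f ∈ M(C) : Lip(f) < 1}` is a
σ-lower porous subset of `M(C)`. -/
theorem stmt_12 {X : Type*} [NormedAddCommGroup X] [NormedSpace ℝ X] [CompleteSpace X]
    (C : Set X) (hC_closed : IsClosed C) (hC_bdd : Bornology.IsBounded C)
    (hC_conv : Convex ℝ C) (hC_nontriv : C.Nontrivial) :
    IsSigmaLowerPorous {f : NonexpMap C | LipGlobal (⇑(f.1)) < 1} := by
  obtain ⟨p₁, h₁, p₂, h₂, hp⟩ := hC_nontriv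
  refine ⟨fun n => {f : NonexpMap C | LipGlobal (⇑f.1) ≤ 1 - 1/((n:ℝ)+2)}, ?_, ?_⟩
  · ext f
    simp only [mem_setOf_eq, mem_iUnion]
    constructor
    · intro hf
      obtain ⟨n, hn⟩ := exists_nat_one_div_lt (by linarith : (0:ℝ) < 1 - LipGlobal (⇑f.1))
      refine ⟨n, ?_⟩
      have hpos : (0:ℝ) < (n:ℝ) + 1 := by positivity
      have h2 : (1:ℝ)/((n:ℝ)+2) ≤ 1/((n:ℝ)+1) := by
        apply one_div_le_one_div_of_le hpos
        linarith
      linarith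
    · rintro ⟨n, hn⟩
      have : (0:ℝ) < 1/((n:ℝ)+2) := by positivity
      linarith
  · intro n
    have hε0 : (0:ℝ) < 1/((n:ℝ)+2) := by positivity
    have hε1 : (1:ℝ)/((n:ℝ)+2) < 1 := by
      rw [div_lt_one (by positivity)]
      have : (0:ℝ) ≤ (n:ℝ) := Nat.cast_nonneg n
      linarith
    exact piece_lower_porous hC_conv hC_bdd h₁ h₂ hp hε0 hε1
end

section
/- Let X be a normed space, let C ⊆ X be a bounded convex set, and let M = M(C) denote the space of non-expansive mappings C → C equipped with the supremum metric. Let λ ∈ (0,1), K > 1, and let φ, ξ : (0,1/K) → (0,∞) be strictly increasing concave functions satisfying φ(t)·ξ(t) ≥ t/K for all t ∈ (0,1/K) and lim_{t→0} φ(t) = lim_{t→0} ξ(t) = 0. Let (s_j)_{j∈ℕ} be a strictly decreasing sequence in (0,1) ∩ (0, sup φ) ∩ (0, diam C / 2) converging to 0 and satisfying φ^{-1}(s_j)/s_j = 2·φ^{-1}(s_{j+1})/s_{j+1} for all j ∈ ℕ. Let (Γ_j)_{j∈ℕ} be a sequence of subsets of C such that each Γ_j is s_j-separated, s_j-dense in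 C, and contains at least two points. For k ∈ ℕ, let P_k denote the set of mappings f ∈ M with the property that for every j ≥ k there exist x ∈ Γ_j and y ∈ C with ‖y−x‖ < (1−λ)·φ^{-1}(s_j)/(48·(1+diam C)) such that Lip(f, y, φ^{-1}(s_j)) ≤ λ. Let f ∈ M \ ⋃_{k∈ℕ} P_k and let l ∈ ℕ. Then the set E := {x ∈ C : sup_{j≥l} Lip(f, x, φ^{-1}(s_j)) ≤ λ} is φ-upper porous at every point of C (in particular, E is a φ-upper porous subset of C). -/
open Filter Metric Set Topology

set_option maxHeartbeats 1600000

/-- (Lemma on `φ`-upper porosity of the sets `E`.)  In the setting of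
the previous lemma, with each `Γ_j` additionally `s_j`-dense in `C`, if
`f ∈ M(C) \ ⋃_k P_k` and `l ∈ ℕ`, then the set
`E = {x ∈ C : Lip(f,x,φ⁻¹(s_j)) ≤ λ for all j ≥ l}` is `φ`-upper porous at every point
of `C`.  (Here `ψ` denotes the inverse `φ⁻¹`.) -/
theorem stmt_15 {X : Type*} [NormedAddCommGroup X] [NormedSpace ℝ X]
    (C : Set X) (hC_bdd : Bornology.IsBounded C) (hC_conv : Convex ℝ C)
    (lam : ℝ) (hlam : lam ∈ Set.Ioo (0 : ℝ) 1)
    (K : ℝ) (hK : 1 < K) (φ ξ : ℝ → ℝ)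
    (hφ_mono : StrictMonoOn φ (Set.Ioo 0 (1 / K)))
    (hφ_conc : ConcaveOn ℝ (Set.Ioo 0 (1 / K)) φ)
    (hφ_pos : ∀ t ∈ Set.Ioo 0 (1 / K), 0 < φ t)
    (hξ_mono : StrictMonoOn ξ (Set.Ioo 0 (1 / K)))
    (hξ_conc : ConcaveOn ℝ (Set.Ioo 0 (1 / K)) ξ)
    (hξ_pos : ∀ t ∈ Set.Ioo 0 (1 / K), 0 < ξ t)
    (hprod : ∀ t ∈ Set.Ioo 0 (1 / K), t / K ≤ φ t * ξ t)
    (hφ_lim : Filter.Tendsto φ (nhdsWithin 0 (Set.Ioi 0)) (nhds 0))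
    (hξ_lim : Filter.Tendsto ξ (nhdsWithin 0 (Set.Ioi 0)) (nhds 0))
    (ψ : ℝ → ℝ)
    (hψ : ∀ u ∈ Set.Ioo 0 (sSup (φ '' Set.Ioo 0 (1 / K))),
      ψ u ∈ Set.Ioo 0 (1 / K) ∧ φ (ψ u) = u)
    (sq : ℕ → ℝ) (hsq_anti : StrictAnti sq)
    (hsq_mem : ∀ j, sq j ∈ Set.Ioo (0 : ℝ) 1 ∧
      sq j < sSup (φ '' Set.Ioo 0 (1 / K)) ∧ sq j < Metric.diam C / 2)
    (hsq_lim : Filter.Tendsto sq Filter.atTop (nhds 0))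
    (hsq_rec : ∀ j, ψ (sq j) / sq j = 2 * (ψ (sq (j + 1)) / sq (j + 1)))
    (Γ : ℕ → Set X) (hΓC : ∀ j, Γ j ⊆ C)
    (hΓ_sep : ∀ j, ∀ x ∈ Γ j, ∀ y ∈ Γ j, x ≠ y → sq j ≤ ‖y - x‖)
    (hΓ_dense : ∀ j, ∀ z ∈ C, ∃ x ∈ Γ j, ‖x - z‖ ≤ sq j)
    (hΓ_nontriv : ∀ j, (Γ j).Nontrivial)
    (f : NonexpMap C)
    (hf : ∀ k : ℕ, f ∉
      {h : NonexpMap C | ∀ j, k ≤ j →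
        ∃ x : ↥C, (x : X) ∈ Γ j ∧ ∃ y : ↥C,
          ‖(y : X) - (x : X)‖ < (1 - lam) * ψ (sq j) / (48 * (1 + Metric.diam C)) ∧
          LipScale (⇑(h.1)) y (ψ (sq j)) ≤ lam})
    (l : ℕ) :
    ∀ z : ↥C,
      IsPhiUpperPorousAt φ
        {x : ↥C | ∀ j, l ≤ j → LipScale (⇑(f.1)) x (ψ (sq j)) ≤ lam} z := by
  classical
  intro z
  set E : Set ↥C := {x : ↥C | ∀ j, l ≤ j → LipScale (⇑(f.1)) x (ψ (sq j)) ≤ lam} with hE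
  obtain ⟨hlam0, hlam1⟩ := hlam
  have hD0 : (0:ℝ) ≤ Metric.diam C := Metric.diam_nonneg
  set D := Metric.diam C with hDdef
  have hden : (0:ℝ) < 48 * (1 + D) := by positivity
  set c : ℝ := (1 - lam) / (48 * (1 + D)) with hcdef
  have hc0 : 0 < c := div_pos (by linarith) hden
  have hc1 : c < 1 := by
    rw [hcdef, div_lt_one hden]; nlinarith
  have hK0 : (0:ℝ) < 1 / K := by positivity
  have hsqpos : ∀ j, 0 < sq j := fun j => (hsq_mem j).1.1
  have hψj : ∀ j, ψ (sq j) ∈ Set.Ioo 0 (1/K) ∧ φ (ψ (sq j)) = sq j := fun j =>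
    hψ (sq j) ⟨hsqpos j, (hsq_mem j).2.1⟩
  -- negation of membership in the sets P_k
  have hf' : ∀ k, ∃ j, k ≤ j ∧ ∀ x : ↥C, (x : X) ∈ Γ j → ∀ y : ↥C,
      ‖(y : X) - (x : X)‖ < (1 - lam) * ψ (sq j) / (48 * (1 + D)) →
      lam < LipScale (⇑(f.1)) y (ψ (sq j)) := by
    intro k
    have h := hf k
    simp only [Set.mem_setOf_eq] at h
    push_neg at h
    exact h
  choose J hJge hJQ using fun k => hf' (max k l)
  have hJk : ∀ k, k ≤ J k := fun k => le_trans (le_max_left _ _) (hJge k)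
  have hJl : ∀ k, l ≤ J k := fun k => le_trans (le_max_right _ _) (hJge k)
  -- the concavity half-estimate
  have hconc_half : ∀ t ∈ Set.Ioo (0:ℝ) (1/K), c/2 * φ t ≤ φ (c * t) := by
    intro t ht
    have h2c : (0:ℝ) < 2 - c := by linarith
    set θ : ℝ := c / (2 - c) with hθdef
    have hθ0 : (0:ℝ) ≤ θ := le_of_lt (div_pos hc0 h2c)
    have hθ1 : θ ≤ 1 := by rw [hθdef, div_le_one h2c]; linarith
    have ht2 : c*t/2 ∈ Set.Ioo (0:ℝ) (1/K) := by
      constructor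
      · have := ht.1; positivity
      · nlinarith [ht.1, ht.2]
    have key := hφ_conc.2 ht ht2 hθ0 (by linarith : (0:ℝ) ≤ 1 - θ) (by ring)
    have harg : θ • t + (1-θ) • (c*t/2) = c * t := by
      simp only [smul_eq_mul, hθdef]
      field_simp
      ring
    rw [harg] at key
    simp only [smul_eq_mul] at key
    have hφ2 : 0 < φ (c*t/2) := hφ_pos _ ht2
    have hφt : 0 < φ t := hφ_pos t ht
    have hθc : c/2 ≤ θ := by
      rw [hθdef, div_le_div_iff₀ (by norm_num : (0:ℝ) < 2) h2c]
      nlinarith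
    nlinarith
  -- two far-apart points in C
  obtain ⟨a, haΓ, b, hbΓ, hab⟩ := hΓ_nontriv 0
  have hsep : sq 0 ≤ ‖b - a‖ := hΓ_sep 0 a haΓ b hbΓ hab
  have far : ∀ y ∈ C, ∃ w ∈ C, sq 0 / 2 ≤ ‖w - y‖ := by
    intro y hy
    have htri : ‖b - a‖ ≤ ‖b - y‖ + ‖a - y‖ := by
      have : b - a = (b - y) - (a - y) := by abel
      rw [this]; exact norm_sub_le _ _
    by_cases hcase : sq 0 / 2 ≤ ‖a - y‖
    · exact ⟨a, hΓC 0 haΓ, hcase⟩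
    · exact ⟨b, hΓC 0 hbΓ, by push_neg at hcase; linarith⟩
  -- bound on the hole radii
  have hbdd : ∀ r : ℝ, 0 < r → 4*r < sq 0 → ∀ s ∈ porHoles E z r, s ≤ 2*r := by
    intro r hr hr4 s hs
    obtain ⟨hs0, y, hy⟩ := hs
    by_contra hcon
    push_neg at hcon
    have hyz : dist y z < r := ((hy (Metric.mem_ball_self hs0)).1 : y ∈ Metric.ball z r)
    obtain ⟨w, hwC, hw⟩ := far y.1 y.2
    set m : ℝ := min s (sq 0 / 2) with hmdef
    have h2rm : 2*r < m := lt_min hcon (by linarith)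
    set s' : ℝ := (2*r + m)/2 with hs'def
    have hs'1 : 2*r < s' := by rw [hs'def]; linarith
    have hs'2 : s' < m := by rw [hs'def]; linarith
    have hs'0 : 0 < s' := by linarith
    have hs's : s' < s := lt_of_lt_of_le hs'2 (min_le_left _ _)
    have hs'w : s' < ‖w - y.1‖ := lt_of_lt_of_le (lt_of_lt_of_le hs'2 (min_le_right _ _)) hw
    have hwy0 : (0:ℝ) < ‖w - y.1‖ := lt_trans hs'0 hs'w
    set t : ℝ := s' / ‖w - y.1‖ with htdef
    have ht0 : 0 < t := div_pos hs'0 hwy0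
    have ht1 : t < 1 := by rw [htdef, div_lt_one hwy0]; exact hs'w
    have hpC : (1-t) • y.1 + t • w ∈ C :=
      hC_conv y.2 hwC (by linarith) (le_of_lt ht0) (by ring)
    have hpeq : (1-t) • y.1 + t • w = y.1 + t • (w - y.1) := by
      rw [smul_sub, sub_smul, one_smul]; abel
    set p : ↥C := ⟨(1-t) • y.1 + t • w, hpC⟩ with hpdef
    have hdist : dist p y = s' := by
      rw [Subtype.dist_eq, dist_eq_norm, hpdef]
      simp only
      rw [hpeq]
      rw [add_sub_cancel_left, norm_smul, Real.norm_eq_abs, abs_of_pos ht0, htdef]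
      field_simp
    have hpball : p ∈ Metric.ball y s := by rw [Metric.mem_ball, hdist]; exact hs's
    have hpz : dist p z < r := ((hy hpball).1 : p ∈ Metric.ball z r)
    have : s' ≤ dist p z + dist z y := by
      calc s' = dist p y := hdist.symm
        _ ≤ dist p z + dist z y := dist_triangle _ _ _
    rw [dist_comm z y] at this
    linarith
  -- the ratio recursion
  have hratio : ∀ j, ψ (sq j) / sq j = (ψ (sq 0) / sq 0) / 2^j := by
    intro j
    induction j with
    | zero => simp
    | succ n ih =>
      have h := hsq_rec n
      rw [pow_succ, ← div_div, ← ih]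
      linarith
  have hψeq : ∀ j, ψ (sq j) = (ψ (sq 0) / sq 0) / 2^j * sq j := by
    intro j
    have h := hratio j
    rw [← h, div_mul_cancel₀ _ (ne_of_gt (hsqpos j))]
  set R : ℝ := ψ (sq 0) / sq 0 with hRdef
  have hR0 : 0 < R := div_pos (hψj 0).1.1 (hsqpos 0)
  -- eventually `c * ψ (sq j) ≤ sq j`
  obtain ⟨N1, hN1⟩ : ∃ N : ℕ, c * R ≤ 2^N := by
    obtain ⟨N, hN⟩ := pow_unbounded_of_one_lt (c * R) (by norm_num : (1:ℝ) < 2)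
    exact ⟨N, le_of_lt hN⟩
  have hδsq : ∀ j, N1 ≤ j → c * ψ (sq j) ≤ sq j := by
    intro j hj
    rw [hψeq j]
    have h2 : (2:ℝ)^N1 ≤ 2^j := pow_le_pow_right₀ (by norm_num) hj
    have hsj := hsqpos j
    rw [show c * (R / 2^j * sq j) = (c * R / 2^j) * sq j by ring]
    have : c * R / 2^j ≤ 1 := by
      rw [div_le_one (by positivity)]
      linarith
    nlinarith
  -- for any j ≥ l for which the "bad" property holds, there is a hole
  have key : ∀ j, l ≤ j →
      (∀ x : ↥C, (x : X) ∈ Γ j → ∀ y : ↥C,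
        ‖(y : X) - (x : X)‖ < (1 - lam) * ψ (sq j) / (48 * (1 + D)) →
        lam < LipScale (⇑(f.1)) y (ψ (sq j))) →
      (c * ψ (sq j)) ∈ porHoles E z (sq j + c * ψ (sq j)) := by
    intro j hlj hQ
    obtain ⟨x, hxΓ, hxz⟩ := hΓ_dense j z.1 z.2
    have hxC : x ∈ C := hΓC j hxΓ
    have hψ0 : 0 < ψ (sq j) := (hψj j).1.1
    refine ⟨by positivity, ⟨x, hxC⟩, ?_⟩
    rintro y hy
    have hyx : ‖(y:X) - x‖ < c * ψ (sq j) := by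
      rw [Metric.mem_ball, Subtype.dist_eq, dist_eq_norm] at hy
      exact hy
    constructor
    · rw [Metric.mem_ball, Subtype.dist_eq, dist_eq_norm]
      calc ‖(y:X) - z.1‖ = ‖((y:X) - x) + (x - z.1)‖ := by rw [sub_add_sub_cancel]
        _ ≤ ‖(y:X) - x‖ + ‖x - z.1‖ := norm_add_le _ _
        _ < c * ψ (sq j) + sq j := add_lt_add_of_lt_of_le hyx hxz
        _ = sq j + c * ψ (sq j) := by ring
    · intro hyE
      have h1 : LipScale (⇑(f.1)) y (ψ (sq j)) ≤ lam := hyE j hlj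
      have h2 := hQ ⟨x, hxC⟩ hxΓ y (by
        show ‖(y:X) - x‖ < _
        rw [show (1-lam) * ψ (sq j) / (48*(1+D)) = c * ψ (sq j) by rw [hcdef]; ring]
        exact hyx)
      exact absurd h1 (not_le.2 h2)
  -- the ratio estimate at good scales
  have main : ∀ j, l ≤ j → N1 ≤ j → sq j < sq 0 / 8 → sq j < 1/(4*K) →
      (∀ x : ↥C, (x : X) ∈ Γ j → ∀ y : ↥C,
        ‖(y : X) - (x : X)‖ < (1 - lam) * ψ (sq j) / (48 * (1 + D)) →
        lam < LipScale (⇑(f.1)) y (ψ (sq j))) →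
      c/4 ≤ φ (porGamma E z (sq j + c * ψ (sq j))) / (sq j + c * ψ (sq j)) := by
    intro j hlj hN1j h8 h4K hQ
    have hψ0 : 0 < ψ (sq j) := (hψj j).1.1
    set r : ℝ := sq j + c * ψ (sq j) with hrdef
    have hr0 : 0 < r := by
      rw [hrdef]; exact add_pos (hsqpos j) (mul_pos hc0 hψ0)
    have hδ : c * ψ (sq j) ≤ sq j := hδsq j hN1j
    have hr2 : r ≤ 2 * sq j := by rw [hrdef]; linarith
    have hr4 : 4 * r < sq 0 := by linarith
    have hmem := key j hlj hQ
    have hub : ∀ s ∈ porHoles E z r, s ≤ 2*r := hbdd r hr0 hr4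
    have hbddA : BddAbove (porHoles E z r) := ⟨2*r, fun s hs => hub s hs⟩
    have hγ1 : c * ψ (sq j) ≤ porGamma E z r := le_csSup hbddA hmem
    have hγ2 : porGamma E z r ≤ 2*r := csSup_le ⟨_, hmem⟩ hub
    have hK1 : (0:ℝ) < K := by linarith
    have h2r : 2*r < 1/K := by
      have h4K' : sq j * (4*K) < 1 := (lt_div_iff₀ (by linarith : (0:ℝ) < 4*K)).1 h4K
      rw [lt_div_iff₀ hK1]
      nlinarith
    have hδIoo : c * ψ (sq j) ∈ Set.Ioo (0:ℝ) (1/K) := by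
      constructor
      · positivity
      · calc c * ψ (sq j) < 1 * ψ (sq j) := mul_lt_mul_of_pos_right hc1 hψ0
          _ = ψ (sq j) := one_mul _
          _ < 1/K := (hψj j).1.2
    have hγIoo : porGamma E z r ∈ Set.Ioo (0:ℝ) (1/K) :=
      ⟨lt_of_lt_of_le hδIoo.1 hγ1, lt_of_le_of_lt hγ2 h2r⟩
    have hφmono : φ (c * ψ (sq j)) ≤ φ (porGamma E z r) :=
      hφ_mono.monotoneOn hδIoo hγIoo hγ1
    have hφlow : c/2 * sq j ≤ φ (porGamma E z r) := by
      have h := hconc_half (ψ (sq j)) (hψj j).1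
      rw [(hψj j).2] at h
      linarith
    have hφpos : 0 < φ (porGamma E z r) := hφ_pos _ hγIoo
    rw [le_div_iff₀ hr0]
    calc c/4 * r ≤ c/4 * (2 * sq j) := by nlinarith
      _ = c/2 * sq j := by ring
      _ ≤ φ (porGamma E z r) := hφlow
  -- conclusion
  constructor
  · -- nonemptiness of holes for every r > 0
    intro r hr
    have hev : ∀ᶠ k in atTop, 2 * sq k < r := by
      have h2 : Tendsto (fun k => 2 * sq k) atTop (nhds 0) := by
        simpa using hsq_lim.const_mul 2
      exact h2.eventually_lt_const hr
    obtain ⟨k, hk1, hk2⟩ := (hev.and (eventually_ge_atTop N1)).exists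
    set j := J k with hjdef
    have hN1j : N1 ≤ j := le_trans hk2 (hJk k)
    have hδ : c * ψ (sq j) ≤ sq j := hδsq j hN1j
    have hsqj : sq j ≤ sq k := hsq_anti.antitone (hJk k)
    have hrj : sq j + c * ψ (sq j) ≤ r := by linarith
    obtain ⟨hs0, y, hy⟩ := key j (hJl k) (hJQ k)
    exact ⟨c * ψ (sq j), hs0, y, hy.trans
      (Set.diff_subset_diff_left (Metric.ball_subset_ball hrj))⟩
  · -- the limsup estimate
    set u : ℕ → ℝ := fun k => sq (J k) + c * ψ (sq (J k)) with hudef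
    have hu0 : ∀ k, 0 < u k := fun k =>
      add_pos (hsqpos (J k)) (mul_pos hc0 (hψj (J k)).1.1)
    have huev : ∀ᶠ k in atTop, u k ≤ 2 * sq k := by
      filter_upwards [eventually_ge_atTop N1] with k hk
      have hδ : c * ψ (sq (J k)) ≤ sq (J k) := hδsq (J k) (le_trans hk (hJk k))
      have hsqj : sq (J k) ≤ sq k := hsq_anti.antitone (hJk k)
      rw [hudef]; simp only; linarith
    have hutend0 : Tendsto u atTop (nhds 0) := by
      apply squeeze_zero' (Eventually.of_forall fun k => (hu0 k).le) huev
      simpa using hsq_lim.const_mul 2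
    have hutend : Tendsto u atTop (nhdsWithin 0 (Set.Ioi 0)) := by
      rw [tendsto_nhdsWithin_iff]
      exact ⟨hutend0, Eventually.of_forall fun k => hu0 k⟩
    have hKK : (0:ℝ) < 1/(4*K) := by positivity
    have hfreqseq : ∀ᶠ k in atTop, c/4 ≤ φ (porGamma E z (u k)) / (u k) := by
      have h8 : ∀ᶠ k in atTop, sq k < sq 0 / 8 :=
        hsq_lim.eventually_lt_const (by linarith [hsqpos 0])
      have h4K : ∀ᶠ k in atTop, sq k < 1/(4*K) :=
        hsq_lim.eventually_lt_const hKK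
      filter_upwards [eventually_ge_atTop N1, h8, h4K] with k hk hk8 hk4
      have hsqj : sq (J k) ≤ sq k := hsq_anti.antitone (hJk k)
      exact main (J k) (hJl k) (le_trans hk (hJk k))
        (lt_of_le_of_lt hsqj hk8) (lt_of_le_of_lt hsqj hk4) (hJQ k)
    have hfreq : ∃ᶠ r in nhdsWithin 0 (Set.Ioi 0),
        c/4 ≤ φ (porGamma E z r) / r :=
      hutend.frequently hfreqseq.frequently
    have hfreq' : ∃ᶠ r in nhdsWithin 0 (Set.Ioi 0),
        ((c/4 : ℝ) : EReal) ≤ ((φ (porGamma E z r) / r : ℝ) : EReal) :=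
      hfreq.mono fun r h => EReal.coe_le_coe_iff.2 h
    calc (0 : EReal) < ((c/4 : ℝ) : EReal) := by
          exact_mod_cast (by positivity : (0:ℝ) < c/4)
      _ ≤ _ := le_limsup_of_frequently_le hfreq'
end
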